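/- Let M, L ∈ ℝ^{d×d} be symmetric matrices and suppose there exists a symmetric positive definite matrix P ∈ ℝ^{d×d} such that MPL + LPM is positive definite. Then M and L are congruent, i.e., there exists an invertible matrix T ∈ ℝ^{d×d} with TᵀMT = L. -/

import Mathlib

/-!
Positivity of `S = M P L + L P M` forces `M` and `L` to be invertible, and every real eigenvalue
`μ` of `X = M⁻¹ L` to be positive: from `L v = μ M v` one gets `vᵀ S v = 2 μ (M v)ᵀ P (M v)`.
Hence `X` is a square modulo its characteristic polynomial — modulo an irreducible factor `q`
take a square root, off the negative real axis, of a complex root of `q`; then lift to powers of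
`q` by Newton's method and glue the factors by the Chinese remainder theorem. This gives
`T = p(X)` with `T² = X` by Cayley–Hamilton. As `M X = L` is symmetric, `M X = Xᵀ M`, hence
`M p(X) = p(X)ᵀ M` and `Tᵀ M T = M T² = M X = L`.
-/

open Polynomial

section SquareRootModulo

variable {R : Type*} [CommRing R]

theorem IsCoprime.of_dvd_sq_sub {q p x : R} (hx : IsCoprime q x) (h : q ∣ p ^ 2 - x) :
    IsCoprime q p := by
  obtain ⟨c, hc⟩ := h
  obtain ⟨a, b, hab⟩ := hx
  exact ⟨a - b * c, b * p, by linear_combination hab + b * hc⟩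

theorem dvd_sq_sub_of_dvd_sub {a p p' x : R} (hp : a ∣ p - p') (hp' : a ∣ p' ^ 2 - x) :
    a ∣ p ^ 2 - x := by
  have hexpand : p ^ 2 - x = (p - p') * (p + p') + (p' ^ 2 - x) := by ring
  rw [hexpand]
  exact dvd_add (dvd_mul_of_dvd_left hp _) hp'

theorem exists_sq_sub_dvd_pow_add_two (h2 : IsUnit (2 : R)) {q x p : R} (hx : IsCoprime q x)
    {n : ℕ} (h : q ^ (n + 1) ∣ p ^ 2 - x) : ∃ p' : R, q ^ (n + 2) ∣ p' ^ 2 - x := by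
  have hqp : IsCoprime q p := hx.of_dvd_sq_sub ((dvd_pow_self q n.succ_ne_zero).trans h)
  obtain ⟨a, b, hab⟩ := ((isCoprime_mul_unit_left_right h2 q p).2 hqp).pow_left (m := n + 1)
  refine ⟨p - (p ^ 2 - x) * b, ?_⟩
  -- Newton's step: `b` inverts the derivative `2 p` modulo `q ^ (n + 1)`.
  have hexpand : (p - (p ^ 2 - x) * b) ^ 2 - x
      = (p ^ 2 - x) * q ^ (n + 1) * a + (p ^ 2 - x) * (p ^ 2 - x) * b ^ 2 := by
    linear_combination (x - p ^ 2) * hab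
  have hsq : q ^ (n + 2) ∣ q ^ (n + 1) * q ^ (n + 1) := by
    rw [← pow_add]; exact pow_dvd_pow q (by omega)
  rw [hexpand]
  exact dvd_add ((hsq.trans (mul_dvd_mul h dvd_rfl)).mul_right a)
    ((hsq.trans (mul_dvd_mul h h)).mul_right _)

theorem exists_sq_sub_dvd_pow (h2 : IsUnit (2 : R)) {q x p : R} (hx : IsCoprime q x)
    (h : q ∣ p ^ 2 - x) (n : ℕ) : ∃ p' : R, q ^ n ∣ p' ^ 2 - x := by
  suffices ∀ n : ℕ, ∃ p' : R, q ^ (n + 1) ∣ p' ^ 2 - x from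
    (this n).imp fun _ hp' => (pow_dvd_pow q n.le_succ).trans hp'
  intro n
  induction n with
  | zero => exact ⟨p, by rwa [zero_add, pow_one]⟩
  | succ n ih =>
    obtain ⟨p', hp'⟩ := ih
    exact exists_sq_sub_dvd_pow_add_two h2 hx hp'

theorem IsCoprime.exists_sq_sub_dvd_mul {a b x pa pb : R} (hab : IsCoprime a b)
    (ha : a ∣ pa ^ 2 - x) (hb : b ∣ pb ^ 2 - x) : ∃ p : R, a * b ∣ p ^ 2 - x := by
  obtain ⟨u, v, huv⟩ := id hab
  refine ⟨pa * (v * b) + pb * (u * a), hab.mul_dvd ?_ ?_⟩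
  · exact dvd_sq_sub_of_dvd_sub ⟨(pb - pa) * u, by linear_combination pa * huv⟩ ha
  · exact dvd_sq_sub_of_dvd_sub ⟨(pa - pb) * v, by linear_combination pb * huv⟩ hb

end SquareRootModulo

theorem Complex.exists_aeval_sq_eq {z : ℂ} (hz : z ∈ Complex.slitPlane) :
    ∃ p : ℝ[X], aeval z p ^ 2 = z := by
  rcases eq_or_ne z.im 0 with him | him
  · have hre : 0 < z.re := by simpa [Complex.mem_slitPlane_iff, him] using hz
    refine ⟨C √z.re, ?_⟩
    rw [aeval_C, Complex.coe_algebraMap, ← Complex.ofReal_pow, Real.sq_sqrt hre.le]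
    exact Complex.ext rfl (by simp [him])
  · -- `1` and `z` span `ℂ` over `ℝ`, so a square root `w` of `z` is a real polynomial in `z`.
    obtain ⟨w, hw⟩ := IsAlgClosed.exists_eq_mul_self z
    refine ⟨C (w.re - w.im / z.im * z.re) + C (w.im / z.im) * X, ?_⟩
    suffices h : aeval z (C (w.re - w.im / z.im * z.re) + C (w.im / z.im) * X) = w by
      rw [h, hw, sq]
    simp only [map_add, map_mul, aeval_C, aeval_X, Complex.coe_algebraMap]
    apply Complex.ext
    · rw [Complex.add_re, Complex.ofReal_re, Complex.re_ofReal_mul, sub_add_cancel]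
    · rw [Complex.add_im, Complex.ofReal_im, Complex.im_ofReal_mul, zero_add,
        div_mul_cancel₀ _ him]

theorem Polynomial.exists_dvd_sq_sub_X_of_irreducible {q : ℝ[X]} (hq : Irreducible q)
    (hpos : ∀ μ : ℝ, q.IsRoot μ → 0 < μ) : ∃ p : ℝ[X], q ∣ p ^ 2 - X := by
  obtain ⟨z, hz⟩ := IsAlgClosed.exists_aeval_eq_zero ℂ q (degree_pos_of_irreducible hq).ne'
  have hslit : z ∈ Complex.slitPlane := by
    refine Complex.mem_slitPlane_iff.2 (or_iff_not_imp_right.2 fun him => hpos _ ?_)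
    have hzre : z = algebraMap ℝ ℂ z.re := Complex.ext rfl (by simpa using him)
    rw [hzre, aeval_algebraMap_apply_eq_algebraMap_eval] at hz
    simpa using hz
  obtain ⟨p, hp⟩ := Complex.exists_aeval_sq_eq hslit
  refine ⟨p, ?_⟩
  rw [minpoly.Irreducible.eq_minpoly hq hz]
  exact (isUnit_C.2 (leadingCoeff_ne_zero.2 hq.ne_zero).isUnit).mul_left_dvd.2
    (minpoly.dvd ℝ z (by simp [hp]))

theorem Polynomial.exists_dvd_sq_sub_X {m : ℝ[X]} (hm : ∀ μ : ℝ, m.IsRoot μ → 0 < μ) :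
    ∃ p : ℝ[X], m ∣ p ^ 2 - X := by
  have h2 : IsUnit (2 : ℝ[X]) := (two_ne_zero (α := ℝ)).isUnit.map C
  induction m using UniqueFactorizationMonoid.induction_on_coprime with
  | h0 => exact (hm 0 (by simp)).false.elim
  | h1 hu => exact ⟨0, hu.dvd⟩
  | @hpr q i hq =>
    rcases i.eq_zero_or_pos with rfl | hi
    · exact ⟨0, by simp⟩
    have hqpos : ∀ μ : ℝ, q.IsRoot μ → 0 < μ := fun μ hμ =>
      hm μ (hμ.dvd (dvd_pow_self q hi.ne'))
    have hqX : IsCoprime q X := hq.irreducible.coprime_iff_not_dvd.2 fun hdvd =>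
      have hXq : X ∣ q := (hq.irreducible.associated_of_dvd irreducible_X hdvd).symm.dvd
      (hqpos 0 (IsRoot.dvd (by simp) hXq)).false
    obtain ⟨p, hp⟩ := exists_dvd_sq_sub_X_of_irreducible hq.irreducible hqpos
    exact exists_sq_sub_dvd_pow h2 hqX hp i
  | @hcp a b hab ha hb =>
    obtain ⟨pa, hpa⟩ := ha fun μ hμ => hm μ (hμ.dvd (dvd_mul_right a b))
    obtain ⟨pb, hpb⟩ := hb fun μ hμ => hm μ (hμ.dvd (dvd_mul_left b a))
    exact hab.isCoprime.exists_sq_sub_dvd_mul hpa hpb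

theorem SemiconjBy.aeval {R A : Type*} [CommSemiring R] [Semiring A] [Algebra R A] {m a b : A}
    (h : SemiconjBy m a b) (p : R[X]) : SemiconjBy m (aeval a p) (aeval b p) := by
  induction p using Polynomial.induction_on' with
  | add p q hp hq => simpa only [map_add] using hp.add_right hq
  | monomial k c =>
    simpa only [aeval_monomial] using
      SemiconjBy.mul_right (Algebra.commute_algebraMap_right c m) (h.pow_right k)

namespace Matrix

variable {n R : Type*} [Fintype n]

theorem IsSymm.dotProduct_mulVec_comm [CommSemiring R] {A : Matrix n n R} (hA : A.IsSymm)
    (v w : n → R) : v ⬝ᵥ (A *ᵥ w) = (A *ᵥ v) ⬝ᵥ w := by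
  rw [dotProduct_mulVec, ← mulVec_transpose, hA.eq]

theorem pos_of_mulVec_eq_smul_mulVec {M L P : Matrix n n ℝ} (hM : M.IsSymm) (hL : L.IsSymm)
    (hP : P.PosSemidef) (hS : (M * P * L + L * P * M).PosDef) {μ : ℝ} {v : n → ℝ} (hv : v ≠ 0)
    (hLv : L *ᵥ v = μ • M *ᵥ v) : 0 < μ := by
  have hpos := hS.dotProduct_mulVec_pos hv
  have hnonneg := hP.dotProduct_mulVec_nonneg (M *ᵥ v)
  rw [star_trivial] at hpos hnonneg
  have hform : v ⬝ᵥ ((M * P * L + L * P * M) *ᵥ v) = 2 * μ * ((M *ᵥ v) ⬝ᵥ (P *ᵥ M *ᵥ v)) := by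
    simp only [add_mulVec, ← mulVec_mulVec, dotProduct_add]
    rw [hM.dotProduct_mulVec_comm, hL.dotProduct_mulVec_comm, hLv]
    simp only [mulVec_smul, dotProduct_smul, smul_dotProduct, smul_eq_mul]
    ring
  rw [hform] at hpos
  nlinarith

variable [DecidableEq n]

theorem IsSymm.isUnit_of_posDef_mul_mul_add {M L P : Matrix n n ℝ} (hM : M.IsSymm)
    (hS : (M * P * L + L * P * M).PosDef) : IsUnit M := by
  rw [isUnit_iff_isUnit_det, isUnit_iff_ne_zero]
  intro h0
  obtain ⟨v, hv0, hv⟩ := exists_mulVec_eq_zero_iff.2 h0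
  have hpos := hS.dotProduct_mulVec_pos hv0
  simp only [star_trivial, add_mulVec, ← mulVec_mulVec, dotProduct_add] at hpos
  rw [hv, mulVec_zero, mulVec_zero, dotProduct_zero, hM.dotProduct_mulVec_comm, hv,
    zero_dotProduct, add_zero] at hpos
  exact hpos.false

theorem pos_of_isRoot_charpoly {M L P X : Matrix n n ℝ} (hM : M.IsSymm) (hL : L.IsSymm)
    (hP : P.PosSemidef) (hS : (M * P * L + L * P * M).PosDef) (hMX : M * X = L) {μ : ℝ}
    (hμ : X.charpoly.IsRoot μ) : 0 < μ := by
  rw [IsRoot.def, eval_charpoly] at hμ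
  obtain ⟨v, hv0, hv⟩ := exists_mulVec_eq_zero_iff.2 hμ
  refine pos_of_mulVec_eq_smul_mulVec hM hL hP hS hv0 ?_
  rw [sub_mulVec, sub_eq_zero, scalar_apply, ← smul_one_eq_diagonal, smul_mulVec,
    one_mulVec] at hv
  rw [← hMX, ← mulVec_mulVec, ← hv, mulVec_smul]

theorem exists_aeval_sq_eq (A : Matrix n n ℝ) (hA : ∀ μ : ℝ, A.charpoly.IsRoot μ → 0 < μ) :
    ∃ p : ℝ[X], aeval A p ^ 2 = A := by
  obtain ⟨p, r, hr⟩ := exists_dvd_sq_sub_X hA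
  refine ⟨p, sub_eq_zero.1 ?_⟩
  simpa [aeval_self_charpoly] using congrArg (aeval A) hr

theorem transpose_aeval [CommSemiring R] (A : Matrix n n R) (p : R[X]) :
    (aeval A p)ᵀ = aeval Aᵀ p := by
  simpa [aeval_op_apply] using
    (congrArg MulOpposite.unop (aeval_algHom_apply (transposeAlgEquiv n R R).toAlgHom A p)).symm

theorem transpose_aeval_mul_mul_aeval_of_sq_eq [CommRing R] {M L X : Matrix n n R}
    (hM : M.IsSymm) (hL : L.IsSymm) (hMX : M * X = L) {p : R[X]} (hp : aeval X p ^ 2 = X) :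
    (aeval X p)ᵀ * M * aeval X p = L := by
  have hX : SemiconjBy M X Xᵀ := by
    rw [SemiconjBy, ← hM.eq, ← transpose_mul, hM.eq, hMX, hL.eq]
  rw [transpose_aeval, ← (hX.aeval p).eq, mul_assoc, ← sq, hp, hMX]

end Matrix

open Matrix

theorem stmt_7 {d : ℕ} (M L : Matrix (Fin d) (Fin d) ℝ)
    (hM : M.IsSymm) (hL : L.IsSymm)
    (h : ∃ P : Matrix (Fin d) (Fin d) ℝ, P.PosDef ∧ (M * P * L + L * P * M).PosDef) :
    ∃ T : Matrix (Fin d) (Fin d) ℝ, IsUnit T ∧ Tᵀ * M * T = L := by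
  obtain ⟨P, hP, hS⟩ := h
  have hMu : IsUnit M := hM.isUnit_of_posDef_mul_mul_add hS
  have hLu : IsUnit L := hL.isUnit_of_posDef_mul_mul_add (add_comm (M * P * L) _ ▸ hS)
  set X := M⁻¹ * L
  have hMX : M * X = L := mul_nonsing_inv_cancel_left M L ((isUnit_iff_isUnit_det M).1 hMu)
  have hXu : IsUnit X := (isUnit_nonsing_inv_iff.2 hMu).mul hLu
  obtain ⟨p, hp⟩ := X.exists_aeval_sq_eq fun _ =>
    pos_of_isRoot_charpoly hM hL hP.posSemidef hS hMX
  exact ⟨aeval X p, (isUnit_pow_iff two_ne_zero).1 (hp.symm ▸ hXu),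
    transpose_aeval_mul_mul_aeval_of_sq_eq hM hL hMX hp⟩
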